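/- arXiv:2601.15601 — 2 statements merged into one kernel-verified Lean document; each statement's English description precedes it below -/
import Mathlib

section
/- For every positive integer k and every complex number q with |q| < 1 (with the relevant denominators nonzero), the rational function Vbar_k defined by Vbar_1(q) = 2q and Vbar_k(q) = ((q^{2k-1} - q) Vbar_{k-1}(q) + 2q^k(1+q^2)) / (1+q^{2k}) for k > 1 admits the closed form: Vbar_k(q) = (1+q^2) · ( 2q^k/(1+q^{2k}) + 2q^k ((q^2;q^2)_{k-1} / (-q^2;q^2)_k) · sum over j from 0 to k−2 of (-1)^{j+1} (-q^2;q^2)_{k-j-2} / (q^2;q^2)_{k-j-2} ). -/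
open scoped BigOperators

/-- The finite q-Pochhammer symbol `(a; q)_N = ∏_{j=0}^{N-1} (1 - a q^j)`. -/
noncomputable def qPoch (a q : ℂ) (N : ℕ) : ℂ := ∏ j ∈ Finset.range N, (1 - a * q ^ j)

/-- The infinite q-Pochhammer symbol `(a; q)_∞ = ∏_{j=0}^{∞} (1 - a q^j)`. -/
noncomputable def qPochInf (a q : ℂ) : ℂ := ∏' j : ℕ, (1 - a * q ^ j)

/-- An overpartition of `n`: a multiset of positive non-overlined parts together with a
finset of positive overlined parts (the overlined parts are distinct), with total sum `n`. -/
structure Overpartition (n : ℕ) where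
  parts : Multiset ℕ
  overlined : Finset ℕ
  parts_pos : ∀ x ∈ parts, 0 < x
  overlined_pos : ∀ x ∈ overlined, 0 < x
  sum_eq : parts.sum + ∑ x ∈ overlined, x = n

/-- `s` is the smallest non-overlined part of `π`, it appears exactly `k` times among the
non-overlined parts, and every overlined part is greater than `s`. -/
def SptbarCond (k : ℕ) {n : ℕ} (π : Overpartition n) (s : ℕ) : Prop :=
  s ∈ π.parts ∧ (∀ x ∈ π.parts, s ≤ x) ∧ π.parts.count s = k ∧ ∀ x ∈ π.overlined, s < x

/-- `SptbarCond` together with: every part other than `s` is incongruent to `s` modulo 2. -/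
def SptbarOCond (k : ℕ) {n : ℕ} (π : Overpartition n) (s : ℕ) : Prop :=
  SptbarCond k π s ∧ (∀ x ∈ π.parts, x ≠ s → x % 2 ≠ s % 2) ∧
    ∀ x ∈ π.overlined, x % 2 ≠ s % 2

/-- The number of parts of `π` that are greater than `s`. -/
def numGreater {n : ℕ} (π : Overpartition n) (s : ℕ) : ℕ :=
  (π.parts.filter (fun x => s < x)).card + π.overlined.card

/-- The total number of parts of the overpartition `π`. -/
def numParts {n : ℕ} (π : Overpartition n) : ℕ :=
  π.parts.card + π.overlined.card

/-- `sptbar k n`: the number of overpartitions of `n` whose smallest non-overlined part `s`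
appears exactly `k` times and all of whose overlined parts are greater than `s`. -/
noncomputable def sptbar (k n : ℕ) : ℕ :=
  Nat.card {π : Overpartition n // ∃ s, SptbarCond k π s}

/-- `sptbar' k n = a_e(k,n) - a_o(k,n)`. -/
noncomputable def sptbar' (k n : ℕ) : ℤ :=
  (Nat.card {π : Overpartition n // ∃ s, SptbarCond k π s ∧ Even (numGreater π s)} : ℤ) -
    (Nat.card {π : Overpartition n // ∃ s, SptbarCond k π s ∧ Odd (numGreater π s)} : ℤ)

/-- `sptbarO k n`: as `sptbar k n`, with all parts other than the smallest non-overlined part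
incongruent to it modulo 2. -/
noncomputable def sptbarO (k n : ℕ) : ℕ :=
  Nat.card {π : Overpartition n // ∃ s, SptbarOCond k π s}

/-- `sptbarO' k n = b_e(k,n) - b_o(k,n)`. -/
noncomputable def sptbarO' (k n : ℕ) : ℤ :=
  (Nat.card {π : Overpartition n // ∃ s, SptbarOCond k π s ∧ Even (numGreater π s)} : ℤ) -
    (Nat.card {π : Overpartition n // ∃ s, SptbarOCond k π s ∧ Odd (numGreater π s)} : ℤ)

/-- The number of overpartitions of `n` into even parts. -/
noncomputable def pbarE (n : ℕ) : ℕ :=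
  Nat.card {π : Overpartition n // (∀ x ∈ π.parts, Even x) ∧ ∀ x ∈ π.overlined, Even x}

/-- The number of overpartitions of `n` into odd parts with no non-overlined part equal to 1. -/
noncomputable def pbarOex (n : ℕ) : ℕ :=
  Nat.card {π : Overpartition n //
    (∀ x ∈ π.parts, Odd x) ∧ (∀ x ∈ π.overlined, Odd x) ∧ (1 : ℕ) ∉ π.parts}

/-- Among overpartitions of `n` into odd parts with no non-overlined 1's: the number of those
with an even number of parts minus the number of those with an odd number of parts. -/
noncomputable def pbarOex' (n : ℕ) : ℤ :=
  (Nat.card {π : Overpartition n // ((∀ x ∈ π.parts, Odd x) ∧ (∀ x ∈ π.overlined, Odd x) ∧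
      (1 : ℕ) ∉ π.parts) ∧ Even (numParts π)} : ℤ) -
    (Nat.card {π : Overpartition n // ((∀ x ∈ π.parts, Odd x) ∧ (∀ x ∈ π.overlined, Odd x) ∧
      (1 : ℕ) ∉ π.parts) ∧ Odd (numParts π)} : ℤ)

/-- `sptkd k n`: the number of partitions of `n` whose smallest part appears exactly `k`
times and all of whose remaining parts are distinct. -/
noncomputable def sptkd (k n : ℕ) : ℕ :=
  Nat.card {m : Multiset ℕ // (∀ x ∈ m, 0 < x) ∧ m.sum = n ∧
    ∃ s, s ∈ m ∧ (∀ x ∈ m, s ≤ x) ∧ m.count s = k ∧ ∀ x ∈ m, x ≠ s → m.count x = 1}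

/-- `Vbar q 1 = 2q` and
`Vbar q k = ((q^(2k-1) - q) * Vbar q (k-1) + 2 q^k (1+q^2)) / (1 + q^(2k))` for `k > 1`. -/
noncomputable def Vbar (q : ℂ) : ℕ → ℂ
  | 0 => 0
  | 1 => 2 * q
  | (k + 2) => ((q ^ (2 * (k + 2) - 1) - q) * Vbar q (k + 1) + 2 * q ^ (k + 2) * (1 + q ^ 2)) /
      (1 + q ^ (2 * (k + 2)))

/-! Writing `a = q²` and `r_m = (-a; a)_m / (a; a)_m`, the recurrence is solved by
`Vbar q k = 2 q^k (1 + a) (a; a)_{k-1} / (-a; a)_k · A_k` with the alternating sum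
`A_k = ∑_{j < k} (-1)^j r_{k-1-j}`: the factor `(q^{2k-1} - q) q^{k-1} = -q^k (1 - a^{k-1})`
turns `(a; a)_{k-2}` into `(a; a)_{k-1}`, so the recurrence becomes `A_{k+1} = r_k - A_k`.
Splitting off the term `r_{k-1}` of `A_k`, and `(a; a)_{k-1} / (-a; a)_k · r_{k-1} = 1 / (1 + a^k)`,
gives the closed form. -/

open Finset

lemma qPoch_succ (a q : ℂ) (n : ℕ) : qPoch a q (n + 1) = qPoch a q n * (1 - a * q ^ n) :=
  prod_range_succ _ n

lemma qPoch_ne_zero {a q : ℂ} (ha : ‖a‖ < 1) (hq : ‖q‖ ≤ 1) (n : ℕ) : qPoch a q n ≠ 0 := by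
  refine prod_ne_zero_iff.mpr fun j _ => sub_ne_zero.mpr fun h => ?_
  have hlt : ‖a * q ^ j‖ < 1 := by
    rw [norm_mul, norm_pow]
    exact mul_lt_one_of_nonneg_of_lt_one_left (norm_nonneg a) ha (pow_le_one₀ (norm_nonneg q) hq)
  simp [← h] at hlt

lemma qPoch_sq_ne_zero {q : ℂ} (hq : ‖q‖ < 1) (n : ℕ) : qPoch (q ^ 2) (q ^ 2) n ≠ 0 := by
  have hq2 : ‖q ^ 2‖ < 1 := by simpa using pow_lt_one₀ (norm_nonneg q) hq two_ne_zero
  exact qPoch_ne_zero hq2 hq2.le n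

lemma qPoch_neg_sq_ne_zero {q : ℂ} (hq : ‖q‖ < 1) (n : ℕ) : qPoch (-q ^ 2) (q ^ 2) n ≠ 0 := by
  have hq2 : ‖q ^ 2‖ < 1 := by simpa using pow_lt_one₀ (norm_nonneg q) hq two_ne_zero
  exact qPoch_ne_zero (by simpa using hq2) hq2.le n

noncomputable def qPochRatio (q : ℂ) (n : ℕ) : ℂ := qPoch (-q) q n / qPoch q q n

noncomputable def altQPochRatioSum (q : ℂ) (n : ℕ) : ℂ :=
  ∑ j ∈ range n, (-1) ^ j * qPochRatio q (n - 1 - j)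

lemma altQPochRatioSum_succ (q : ℂ) (n : ℕ) :
    altQPochRatioSum q (n + 1) = qPochRatio q n - altQPochRatioSum q n := by
  rw [altQPochRatioSum, sum_range_succ', altQPochRatioSum, sub_eq_neg_add, ← sum_neg_distrib]
  congr 1
  · refine sum_congr rfl fun j _ => ?_
    rw [show n + 1 - 1 - (j + 1) = n - 1 - j by omega, pow_succ]
    ring
  · simp

lemma Vbar_succ_eq {q : ℂ} (hq : ‖q‖ < 1) (k : ℕ) :
    Vbar q (k + 1) = 2 * q ^ (k + 1) * (1 + q ^ 2) *
      (qPoch (q ^ 2) (q ^ 2) k / qPoch (-q ^ 2) (q ^ 2) (k + 1)) *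
        altQPochRatioSum (q ^ 2) (k + 1) := by
  induction k with
  | zero =>
    have h1 : 1 + q ^ 2 ≠ 0 := by simpa [qPoch] using qPoch_neg_sq_ne_zero hq 1
    simp [Vbar, qPoch, altQPochRatioSum, qPochRatio, h1]
  | succ k ih =>
    set t := q ^ (k + 1)
    have hstep : Vbar q (k + 2) = ((q * t ^ 2 - q) * Vbar q (k + 1) + 2 * (q * t) * (1 + q ^ 2)) /
        (1 + (q * t) ^ 2) := by
      rw [Vbar, show 2 * (k + 2) - 1 = 2 * k + 3 by omega]
      ring
    have hPsucc : qPoch (q ^ 2) (q ^ 2) (k + 1) = qPoch (q ^ 2) (q ^ 2) k * (1 - t ^ 2) := by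
      rw [qPoch_succ]
      ring
    have hQsucc : qPoch (-q ^ 2) (q ^ 2) (k + 2) =
        qPoch (-q ^ 2) (q ^ 2) (k + 1) * (1 + (q * t) ^ 2) := by
      rw [qPoch_succ]
      ring
    obtain ⟨hPk, ht⟩ := mul_ne_zero_iff.mp (hPsucc ▸ qPoch_sq_ne_zero hq (k + 1))
    obtain ⟨hQk, hqt⟩ := mul_ne_zero_iff.mp (hQsucc ▸ qPoch_neg_sq_ne_zero hq (k + 2))
    rw [hstep, ih, altQPochRatioSum_succ _ (k + 1), qPochRatio, hPsucc, hQsucc,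
      show q ^ (k + 1 + 1) = q * t by ring]
    field_simp
    ring

/-- Theorem 2.5 (first part): closed form for `Vbar q k`. -/
theorem Vbar_closed_form (k : ℕ) (hk : 1 ≤ k) (q : ℂ) (hq : ‖q‖ < 1) :
    Vbar q k = (1 + q ^ 2) *
      (2 * q ^ k / (1 + q ^ (2 * k)) +
        2 * q ^ k * (qPoch (q ^ 2) (q ^ 2) (k - 1) / qPoch (-q ^ 2) (q ^ 2) k) *
          ∑ j ∈ Finset.range (k - 1), (-1 : ℂ) ^ (j + 1) *
            (qPoch (-q ^ 2) (q ^ 2) (k - j - 2) / qPoch (q ^ 2) (q ^ 2) (k - j - 2))) := by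
  obtain ⟨n, rfl⟩ := Nat.exists_eq_add_of_le' hk
  have hsum : ∑ j ∈ range n, (-1 : ℂ) ^ (j + 1) *
      (qPoch (-q ^ 2) (q ^ 2) (n + 1 - j - 2) / qPoch (q ^ 2) (q ^ 2) (n + 1 - j - 2)) =
        -altQPochRatioSum (q ^ 2) n := by
    rw [altQPochRatioSum, ← sum_neg_distrib]
    refine sum_congr rfl fun j _ => ?_
    rw [show n + 1 - j - 2 = n - 1 - j by omega, qPochRatio, pow_succ]
    ring
  have hP := qPoch_sq_ne_zero hq n
  have hQsucc : qPoch (-q ^ 2) (q ^ 2) (n + 1) =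
      qPoch (-q ^ 2) (q ^ 2) n * (1 + q ^ (2 * (n + 1))) := by
    rw [qPoch_succ]
    ring
  obtain ⟨hQn, hden⟩ := mul_ne_zero_iff.mp (hQsucc ▸ qPoch_neg_sq_ne_zero hq (n + 1))
  rw [Vbar_succ_eq hq, altQPochRatioSum_succ, Nat.add_sub_cancel, hsum, qPochRatio, hQsucc]
  field_simp
  ring
end

section
/- For every integer n > 1, sptbar_1(n) + sptbar_1(n−1) equals the number of overpartitions of n that have no non-overlined parts equal to 1. -/
open scoped BigOperators

/-!
Overlining the smallest non-overlined part `s` of an overpartition counted by `sptbar 1 n`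
gives exactly the overpartitions of `n` whose smallest part occurs only overlined; replacing
that part `s` by `s + 1` in one counted by `sptbar 1 (n - 1)` gives exactly the overpartitions
of `n` whose smallest part occurs non-overlined and is at least `2`. Every overpartition of
`n ≥ 1` without a non-overlined `1` is of exactly one of these two kinds.
-/

theorem Nat.card_subtype_exists_eq_card_prod {α β : Type*} {P : α → β → Prop}
    (huniq : ∀ a b c, P a b → P a c → b = c) :
    Nat.card {a // ∃ b, P a b} = Nat.card {p : α × β // P p.1 p.2} := by
  refine (Nat.card_congr (Equiv.ofBijective (fun p => ⟨p.1.1, p.1.2, p.2⟩) ⟨?_, ?_⟩)).symm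
  · rintro ⟨⟨a, b⟩, hb⟩ ⟨⟨a', c⟩, hc⟩ h
    obtain rfl : a = a' := congrArg Subtype.val h
    obtain rfl := huniq a b c hb hc
    rfl
  · rintro ⟨a, b, hb⟩
    exact ⟨⟨(a, b), hb⟩, rfl⟩

theorem Multiset.forall_mem_erase_lt_iff {α : Type*} [LinearOrder α] {m : Multiset α} {s : α}
    (hs : s ∈ m) : (∀ x ∈ m.erase s, s < x) ↔ (∀ x ∈ m, s ≤ x) ∧ m.count s = 1 := by
  obtain ⟨m, rfl⟩ := Multiset.exists_cons_of_mem hs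
  simp only [Multiset.erase_cons_head, Multiset.forall_mem_cons, le_refl, true_and,
    Multiset.count_cons_self, add_eq_right, Multiset.count_eq_zero]
  exact ⟨fun h => ⟨fun x hx => (h x hx).le, fun hs => (h s hs).false⟩,
    fun ⟨hle, hs⟩ x hx => (hle x hx).lt_of_ne (by rintro rfl; exact hs hx)⟩

attribute [ext] Overpartition

namespace Overpartition

variable {n : ℕ}

theorem sum_parts_add_overlined (π : Overpartition n) : (π.parts + π.overlined.val).sum = n := by
  rw [Multiset.sum_add, ← Multiset.map_id' π.overlined.val, ← Finset.sum_eq_multiset_sum,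
    π.sum_eq]

theorem le_of_mem_overlined (π : Overpartition n) {x : ℕ} (hx : x ∈ π.overlined) : x ≤ n :=
  π.sum_eq ▸ (Finset.single_le_sum (f := id) (fun _ _ => Nat.zero_le _) hx).trans le_add_self

/-- An overpartition is determined by the partition of `n` formed by all its parts together
with its set of overlined parts. -/
instance : Finite (Overpartition n) := by
  refine Finite.of_injective (β := n.Partition × (Finset.range (n + 1)).powerset)
    (fun π => (⟨π.parts + π.overlined.val, fun hx => ?_, π.sum_parts_add_overlined⟩,
      ⟨π.overlined, Finset.mem_powerset.2 fun x hx =>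
        Finset.mem_range_succ_iff.2 (π.le_of_mem_overlined hx)⟩)) ?_
  · rcases Multiset.mem_add.1 hx with hx | hx
    exacts [π.parts_pos _ hx, π.overlined_pos _ hx]
  · intro π ρ h
    simp only [Prod.mk.injEq, Subtype.mk.injEq, Nat.Partition.ext_iff] at h
    ext1
    · exact add_right_cancel (h.1.trans (by rw [h.2]))
    · exact h.2

theorem _root_.SptbarCond.unique {k : ℕ} {π : Overpartition n} {s t : ℕ} (hs : SptbarCond k π s)
    (ht : SptbarCond k π t) : s = t :=
  le_antisymm (hs.2.1 t ht.1) (ht.2.1 s hs.1)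

theorem sptbarCond_one_iff {π : Overpartition n} {s : ℕ} :
    SptbarCond 1 π s ↔
      s ∈ π.parts ∧ (∀ x ∈ π.parts.erase s, s < x) ∧ ∀ y ∈ π.overlined, s < y := by
  constructor
  · rintro ⟨hs, hle, hcount, hov⟩
    exact ⟨hs, (Multiset.forall_mem_erase_lt_iff hs).2 ⟨hle, hcount⟩, hov⟩
  · rintro ⟨hs, hlt, hov⟩
    obtain ⟨hle, hcount⟩ := (Multiset.forall_mem_erase_lt_iff hs).1 hlt
    exact ⟨hs, hle, hcount, hov⟩

theorem _root_.SptbarCond.notMem_overlined {k : ℕ} {π : Overpartition n} {s : ℕ}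
    (h : SptbarCond k π s) : s ∉ π.overlined :=
  fun hs => (h.2.2.2 s hs).false

def IsSmallestPartOverlined (ρ : Overpartition n) (s : ℕ) : Prop :=
  s ∈ ρ.overlined ∧ (∀ x ∈ ρ.parts, s < x) ∧ ∀ y ∈ ρ.overlined, s ≤ y

def IsSmallestPartNonOverlined (ρ : Overpartition n) (s : ℕ) : Prop :=
  s ∈ ρ.parts ∧ (∀ x ∈ ρ.parts, s ≤ x) ∧ ∀ y ∈ ρ.overlined, s ≤ y

theorem IsSmallestPartOverlined.unique {ρ : Overpartition n} {s t : ℕ}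
    (hs : ρ.IsSmallestPartOverlined s) (ht : ρ.IsSmallestPartOverlined t) : s = t :=
  le_antisymm (hs.2.2 t ht.1) (ht.2.2 s hs.1)

theorem IsSmallestPartNonOverlined.unique {ρ : Overpartition n} {s t : ℕ}
    (hs : ρ.IsSmallestPartNonOverlined s) (ht : ρ.IsSmallestPartNonOverlined t) : s = t :=
  le_antisymm (hs.2.1 t ht.1) (ht.2.1 s hs.1)

theorem IsSmallestPartOverlined.not_isSmallestPartNonOverlined {ρ : Overpartition n} {s t : ℕ}
    (hs : ρ.IsSmallestPartOverlined s) : ¬ ρ.IsSmallestPartNonOverlined t :=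
  fun ht => (hs.2.1 t ht.1).not_ge (ht.2.2 s hs.1)

theorem exists_isSmallestPartOverlined_or_isSmallestPartNonOverlined (hn : n ≠ 0)
    (ρ : Overpartition n) :
    (∃ s, ρ.IsSmallestPartOverlined s) ∨ ∃ s, ρ.IsSmallestPartNonOverlined s := by
  have hne : (ρ.parts.toFinset ∪ ρ.overlined).Nonempty := by
    rw [Finset.nonempty_iff_ne_empty, Ne, Finset.union_eq_empty, Multiset.toFinset_eq_empty]
    rintro ⟨hp, ho⟩
    exact hn (by simpa [hp, ho] using ρ.sum_eq.symm)
  obtain ⟨m, hm, hmin⟩ := (ρ.parts.toFinset ∪ ρ.overlined).exists_min_image id hne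
  simp only [Finset.mem_union, Multiset.mem_toFinset, id] at hm hmin
  have hle_parts : ∀ x ∈ ρ.parts, m ≤ x := fun x hx => hmin x (.inl hx)
  have hle_overlined : ∀ y ∈ ρ.overlined, m ≤ y := fun y hy => hmin y (.inr hy)
  by_cases hmp : m ∈ ρ.parts
  · exact .inr ⟨m, hmp, hle_parts, hle_overlined⟩
  · refine .inl ⟨m, hm.resolve_left hmp, fun x hx => (hle_parts x hx).lt_of_ne ?_,
      hle_overlined⟩
    rintro rfl
    exact hmp hx

theorem one_notMem_parts_iff (hn : n ≠ 0) (ρ : Overpartition n) :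
    1 ∉ ρ.parts ↔
      (∃ s, ρ.IsSmallestPartOverlined s) ∨ ∃ s, ρ.IsSmallestPartNonOverlined s ∧ 1 < s := by
  constructor
  · intro h1
    refine (exists_isSmallestPartOverlined_or_isSmallestPartNonOverlined hn ρ).imp_right ?_
    rintro ⟨s, hs⟩
    have hs1 : s ≠ 1 := by rintro rfl; exact h1 hs.1
    exact ⟨s, hs, by have := ρ.parts_pos s hs.1; omega⟩
  · rintro (⟨s, hs⟩ | ⟨s, hs, hs1⟩) h1
    · have := hs.2.1 1 h1
      have := ρ.overlined_pos s hs.1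
      omega
    · have := hs.2.1 1 h1
      omega

open Classical in
noncomputable def oneNotMemPartsEquiv (hn : n ≠ 0) :
    {ρ : Overpartition n // 1 ∉ ρ.parts} ≃
      {ρ : Overpartition n // ∃ s, ρ.IsSmallestPartOverlined s} ⊕
        {ρ : Overpartition n // ∃ s, ρ.IsSmallestPartNonOverlined s ∧ 1 < s} :=
  (Equiv.subtypeEquivRight (one_notMem_parts_iff hn)).trans <|
    subtypeOrEquiv _ _ <| Pi.disjoint_iff.2 fun _ => disjoint_iff_inf_le.2
      fun ⟨⟨_, hs⟩, ⟨_, ht, _⟩⟩ => hs.not_isSmallestPartNonOverlined ht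

def overline (π : Overpartition n) (s : ℕ) (hs : s ∈ π.parts) (hs' : s ∉ π.overlined) :
    Overpartition n where
  parts := π.parts.erase s
  overlined := insert s π.overlined
  parts_pos x hx := π.parts_pos x (Multiset.mem_of_mem_erase hx)
  overlined_pos x hx := by
    rcases Finset.mem_insert.1 hx with rfl | hx
    exacts [π.parts_pos x hs, π.overlined_pos x hx]
  sum_eq := by
    have := Multiset.sum_erase hs
    rw [Finset.sum_insert hs']
    linarith [π.sum_eq]

def unoverline (ρ : Overpartition n) (s : ℕ) (hs : s ∈ ρ.overlined) : Overpartition n where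
  parts := s ::ₘ ρ.parts
  overlined := ρ.overlined.erase s
  parts_pos x hx := by
    rcases Multiset.mem_cons.1 hx with rfl | hx
    exacts [ρ.overlined_pos x hs, ρ.parts_pos x hx]
  overlined_pos x hx := ρ.overlined_pos x (Finset.mem_of_mem_erase hx)
  sum_eq := by
    have := Finset.add_sum_erase _ (fun x => x) hs
    rw [Multiset.sum_cons]
    linarith [ρ.sum_eq]

def incrementPart (π : Overpartition n) (s : ℕ) (hs : s ∈ π.parts) : Overpartition (n + 1) where
  parts := (s + 1) ::ₘ π.parts.erase s
  overlined := π.overlined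
  parts_pos x hx := by
    rcases Multiset.mem_cons.1 hx with rfl | hx
    exacts [s.succ_pos, π.parts_pos x (Multiset.mem_of_mem_erase hx)]
  overlined_pos := π.overlined_pos
  sum_eq := by
    have := Multiset.sum_erase hs
    rw [Multiset.sum_cons]
    linarith [π.sum_eq]

def decrementPart (ρ : Overpartition (n + 1)) (t : ℕ) (ht : t ∈ ρ.parts) (ht1 : 1 < t) :
    Overpartition n where
  parts := (t - 1) ::ₘ ρ.parts.erase t
  overlined := ρ.overlined
  parts_pos x hx := by
    rcases Multiset.mem_cons.1 hx with rfl | hx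
    exacts [Nat.sub_pos_of_lt ht1, ρ.parts_pos x (Multiset.mem_of_mem_erase hx)]
  overlined_pos := ρ.overlined_pos
  sum_eq := by
    have := Multiset.sum_erase ht
    have := ρ.sum_eq
    rw [Multiset.sum_cons]
    omega

theorem unoverline_overline (π : Overpartition n) (s : ℕ) (hs : s ∈ π.parts)
    (hs' : s ∉ π.overlined) :
    (π.overline s hs hs').unoverline s (Finset.mem_insert_self s _) = π := by
  ext1
  exacts [Multiset.cons_erase hs, Finset.erase_insert hs']

theorem overline_unoverline (ρ : Overpartition n) (s : ℕ) (hs : s ∈ ρ.overlined) :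
    (ρ.unoverline s hs).overline s (Multiset.mem_cons_self s _) (Finset.notMem_erase s _) = ρ := by
  ext1
  exacts [Multiset.erase_cons_head _ _, Finset.insert_erase hs]

theorem decrementPart_incrementPart (π : Overpartition n) (s : ℕ) (hs : s ∈ π.parts) :
    (π.incrementPart s hs).decrementPart (s + 1) (Multiset.mem_cons_self _ _)
      (Nat.lt_add_of_pos_left (π.parts_pos s hs)) = π := by
  ext1
  · simp only [decrementPart, incrementPart, Multiset.erase_cons_head, Nat.add_sub_cancel,
      Multiset.cons_erase hs]
  · rfl

theorem incrementPart_decrementPart (ρ : Overpartition (n + 1)) (t : ℕ) (ht : t ∈ ρ.parts)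
    (ht1 : 1 < t) :
    (ρ.decrementPart t ht ht1).incrementPart (t - 1) (Multiset.mem_cons_self _ _) = ρ := by
  ext1
  · simp only [decrementPart, incrementPart, Multiset.erase_cons_head, Nat.sub_add_cancel ht1.le,
      Multiset.cons_erase ht]
  · rfl

theorem _root_.SptbarCond.isSmallestPartOverlined_overline {π : Overpartition n} {s : ℕ}
    (h : SptbarCond 1 π s) : (π.overline s h.1 h.notMem_overlined).IsSmallestPartOverlined s := by
  obtain ⟨-, hlt, hov⟩ := sptbarCond_one_iff.1 h
  refine ⟨Finset.mem_insert_self _ _, hlt, fun y hy => ?_⟩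
  rcases Finset.mem_insert.1 hy with rfl | hy
  exacts [le_rfl, (hov y hy).le]

theorem IsSmallestPartOverlined.sptbarCond_unoverline {ρ : Overpartition n} {s : ℕ}
    (h : ρ.IsSmallestPartOverlined s) : SptbarCond 1 (ρ.unoverline s h.1) s :=
  sptbarCond_one_iff.2 ⟨Multiset.mem_cons_self _ _,
    by simpa only [unoverline, Multiset.erase_cons_head] using h.2.1,
    fun y hy => (h.2.2 y (Finset.mem_of_mem_erase hy)).lt_of_ne (Finset.ne_of_mem_erase hy).symm⟩

theorem _root_.SptbarCond.isSmallestPartNonOverlined_incrementPart {π : Overpartition n} {s : ℕ}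
    (h : SptbarCond 1 π s) : (π.incrementPart s h.1).IsSmallestPartNonOverlined (s + 1) := by
  obtain ⟨-, hlt, hov⟩ := sptbarCond_one_iff.1 h
  exact ⟨Multiset.mem_cons_self _ _, Multiset.forall_mem_cons.2 ⟨le_rfl, hlt⟩, hov⟩

theorem IsSmallestPartNonOverlined.sptbarCond_decrementPart {ρ : Overpartition (n + 1)} {t : ℕ}
    (h : ρ.IsSmallestPartNonOverlined t) (ht1 : 1 < t) :
    SptbarCond 1 (ρ.decrementPart t h.1 ht1) (t - 1) := by
  refine sptbarCond_one_iff.2 ⟨Multiset.mem_cons_self _ _, fun x hx => ?_, fun y hy => ?_⟩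
  · rw [decrementPart, Multiset.erase_cons_head] at hx
    have := h.2.1 x (Multiset.mem_of_mem_erase hx)
    omega
  · have := h.2.2 y hy
    omega

def overlineEquiv :
    {p : Overpartition n × ℕ // SptbarCond 1 p.1 p.2} ≃
      {p : Overpartition n × ℕ // p.1.IsSmallestPartOverlined p.2} where
  toFun p := ⟨(p.1.1.overline p.1.2 p.2.1 p.2.notMem_overlined, p.1.2),
    p.2.isSmallestPartOverlined_overline⟩
  invFun p := ⟨(p.1.1.unoverline p.1.2 p.2.1, p.1.2), p.2.sptbarCond_unoverline⟩
  left_inv p :=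
    Subtype.ext (Prod.ext (unoverline_overline p.1.1 p.1.2 p.2.1 p.2.notMem_overlined) rfl)
  right_inv p := Subtype.ext (Prod.ext (overline_unoverline p.1.1 p.1.2 p.2.1) rfl)

def incrementPartEquiv :
    {p : Overpartition n × ℕ // SptbarCond 1 p.1 p.2} ≃
      {p : Overpartition (n + 1) × ℕ // p.1.IsSmallestPartNonOverlined p.2 ∧ 1 < p.2} where
  toFun p := ⟨(p.1.1.incrementPart p.1.2 p.2.1, p.1.2 + 1),
    p.2.isSmallestPartNonOverlined_incrementPart, Nat.lt_add_of_pos_left (p.1.1.parts_pos _ p.2.1)⟩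
  invFun p := ⟨(p.1.1.decrementPart p.1.2 p.2.1.1 p.2.2, p.1.2 - 1),
    p.2.1.sptbarCond_decrementPart p.2.2⟩
  left_inv p := Subtype.ext <|
    Prod.ext (decrementPart_incrementPart p.1.1 p.1.2 p.2.1) (Nat.add_sub_cancel _ _)
  right_inv p := Subtype.ext <|
    Prod.ext (incrementPart_decrementPart p.1.1 p.1.2 p.2.1.1 p.2.2) (Nat.sub_add_cancel p.2.2.le)

end Overpartition

open Overpartition in
/-- Corollary 4.1: `sptbar 1 n + sptbar 1 (n-1)` counts overpartitions of `n`
with no non-overlined part equal to `1`. -/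
theorem sptbar_one_add (n : ℕ) (hn : 1 < n) :
    sptbar 1 n + sptbar 1 (n - 1) =
      Nat.card {π : Overpartition n // (1 : ℕ) ∉ π.parts} := by
  obtain ⟨m, rfl⟩ : ∃ m, n = m + 1 := ⟨n - 1, by omega⟩
  calc sptbar 1 (m + 1) + sptbar 1 (m + 1 - 1)
      = Nat.card {p : Overpartition (m + 1) × ℕ // SptbarCond 1 p.1 p.2} +
          Nat.card {p : Overpartition m × ℕ // SptbarCond 1 p.1 p.2} := by
        rw [Nat.add_sub_cancel, sptbar, sptbar,
          Nat.card_subtype_exists_eq_card_prod (P := SptbarCond 1) fun _ _ _ => SptbarCond.unique,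
          Nat.card_subtype_exists_eq_card_prod (P := SptbarCond 1) fun _ _ _ => SptbarCond.unique]
    _ = Nat.card {p : Overpartition (m + 1) × ℕ // p.1.IsSmallestPartOverlined p.2} +
          Nat.card {p : Overpartition (m + 1) × ℕ //
            p.1.IsSmallestPartNonOverlined p.2 ∧ 1 < p.2} := by
        rw [Nat.card_congr overlineEquiv, Nat.card_congr incrementPartEquiv]
    _ = Nat.card {π : Overpartition (m + 1) // (1 : ℕ) ∉ π.parts} := by
        rw [Nat.card_congr (oneNotMemPartsEquiv m.succ_ne_zero), Nat.card_sum]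
        congr 1
        · exact (Nat.card_subtype_exists_eq_card_prod (P := IsSmallestPartOverlined)
            fun _ _ _ => IsSmallestPartOverlined.unique).symm
        · exact (Nat.card_subtype_exists_eq_card_prod
              (P := fun (ρ : Overpartition (m + 1)) s => ρ.IsSmallestPartNonOverlined s ∧ 1 < s)
            fun _ _ _ hs ht => hs.1.unique ht.1).symm
end
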